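/- arXiv:2502.18885 — 4 statements merged into one kernel-verified Lean document; each statement's English description precedes it below -/
import Mathlib

section
/- Soundness of the Since-elimination (induction) rule: if (π,i) ⊨ φ S ψ, and χ holds at every point of the run prefix satisfying Γ ∧ ψ, and χ holds at every point satisfying Γ ∧ φ ∧ Prev(φ S ψ), then—assuming Γ holds at (π,i)—(π,i) ⊨ χ. It suffices to prove: for all i, if (π,i) ⊨ φ S ψ then ((π,i) ⊨ ψ → (π,i) ⊨ χ) and ((π,i) ⊨ φ ∧ Prev(φ S ψ) → (π,i) ⊨ χ) together imply (π,i) ⊨ χ. -/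
structure Run (S Tid : Type) where
  state : ℕ → S
  act : ℕ → Tid

def Since {S Tid : Type} (φ ψ : Run S Tid × ℕ → Prop)
    (π : Run S Tid) (i : ℕ) : Prop :=
  ∃ j ≤ i, ψ (π, j) ∧ ∀ k, j < k → k ≤ i → φ (π, k)

/-- `(π,i) ⊨ Prev φ` iff `i > 0` and `(π,i−1) ⊨ φ`. -/
def Prev {S Tid : Type} (φ : Run S Tid × ℕ → Prop)
    (π : Run S Tid) (i : ℕ) : Prop :=
  0 < i ∧ φ (π, i - 1)

namespace Since

variable {S Tid : Type} {φ ψ : Run S Tid × ℕ → Prop} {π : Run S Tid} {i : ℕ}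

theorem iff_or_prev :
    Since φ ψ π i ↔ ψ (π, i) ∨ (φ (π, i) ∧ Prev (fun p => Since φ ψ p.1 p.2) π i) := by
  constructor
  · rintro ⟨j, hji, hψ, hφ⟩
    rcases hji.eq_or_lt with rfl | hlt
    · exact Or.inl hψ
    · refine Or.inr ⟨hφ i hlt le_rfl, by omega, j, by omega, hψ, fun k hjk hk => hφ k hjk (by omega)⟩
  · rintro (hψ | ⟨hφi, hi, j, hj, hψ, hφ⟩)
    · exact ⟨i, le_rfl, hψ, fun k hik hki => absurd hki (not_le.2 hik)⟩
    · refine ⟨j, by omega, hψ, fun k hjk hki => ?_⟩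
      rcases hki.eq_or_lt with rfl | hlt
      · exact hφi
      · exact hφ k hjk (by omega)

end Since

/-- soundness of the Since-elimination rule `sinceE`:
if `Γ ⊨ φ S ψ`, `Γ, ψ ⊨ χ`, and `Γ, φ, Prev(φ S ψ) ⊨ χ`, then `Γ ⊨ χ`;
here instantiated at an arbitrary point `(π,i)` satisfying `Γ`. -/
theorem sinceE_sound {S Tid : Type}
    (Γ : Run S Tid × ℕ → Prop) (φ ψ χ : Run S Tid × ℕ → Prop)
    (h0 : ∀ π i, Γ (π, i) → Since φ ψ π i)
    (h1 : ∀ π i, Γ (π, i) → ψ (π, i) → χ (π, i))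
    (h2 : ∀ π i, Γ (π, i) → φ (π, i) → Prev (fun p => Since φ ψ p.1 p.2) π i →
      χ (π, i))
    (π : Run S Tid) (i : ℕ) (hΓ : Γ (π, i)) : χ (π, i) := by
  rcases Since.iff_or_prev.1 (h0 π i hΓ) with hψ | ⟨hφ, hprev⟩
  · exact h1 π i hΓ hψ
  · exact h2 π i hΓ hφ hprev
end

section
/- Stability lifting: for any thread A and state predicate φ, if at point (π,i) the formula Stable_A(φ) holds (every step not performed by A preserves φ) and Last_A(φ) holds (φ held at the state reached by A's most recent step, with no A-step since), then φ holds at (π,i). -/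
/-- `after_A` holds at `(π,k)` iff `k > 0` and the step from `k−1` to `k` was
performed by `A`. -/
def afterA {S Tid : Type} (A : Tid) (π : Run S Tid) (k : ℕ) : Prop :=
  0 < k ∧ π.act (k - 1) = A

/-- `Stable_A(φ)` at `(π,i)`: every step up to `i` not performed by `A`
preserves the state predicate `φ`. -/
def StableA {S Tid : Type} (A : Tid) (φ : S → Prop)
    (π : Run S Tid) (i : ℕ) : Prop :=
  ∀ k, 0 < k → k ≤ i → π.act (k - 1) ≠ A →
    φ (π.state (k - 1)) → φ (π.state k)

/-- `Last_A(P) = ¬after_A S (after_A ∧ P)`: `P` held at the state reached by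
`A`'s most recent step, and no `A`-step occurred since. -/
def LastA {S Tid : Type} (A : Tid) (P : ℕ → Prop)
    (π : Run S Tid) (i : ℕ) : Prop :=
  ∃ j ≤ i, (afterA A π j ∧ P j) ∧ ∀ k, j < k → k ≤ i → ¬ afterA A π k

theorem StableA.holds_of_not_afterA {S Tid : Type} {A : Tid} {φ : S → Prop}
    {π : Run S Tid} {i j : ℕ} (hstable : StableA A φ π i)
    (hquiet : ∀ k, j < k → k ≤ i → ¬ afterA A π k) (hj : φ (π.state j)) :
    ∀ n, j ≤ n → n ≤ i → φ (π.state n) := by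
  refine Nat.le_induction (fun _ => hj) fun n hjn ih hn => ?_
  have hnotA : π.act n ≠ A := fun hact => hquiet (n + 1) (by omega) hn ⟨n.succ_pos, hact⟩
  exact hstable (n + 1) n.succ_pos hn hnotA (ih (by omega))

/-- stability lifting: `Stable_A(φ) ∧ Last_A(φ) ⊨ φ`. -/
theorem stability_lifting {S Tid : Type} (A : Tid) (φ : S → Prop)
    (π : Run S Tid) (i : ℕ)
    (hstable : StableA A φ π i)
    (hlast : LastA A (fun k => φ (π.state k)) π i) :
    φ (π.state i) := by
  obtain ⟨j, hji, ⟨-, hj⟩, hquiet⟩ := hlast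
  exact hstable.holds_of_not_afterA hquiet hj i hji le_rfl
end

section
/- Knowledge persistence between A-steps: for any thread A and formula φ, if (π,i) ⊨ Last_A(K_A φ) (A knew φ at its most recent step and has taken no step since), then (π,i) ⊨ K_A φ. -/
def Hist {S Tid O : Type} [DecidableEq Tid] (obs : Tid → S → O) (A : Tid)
    (π : Run S Tid) (i : ℕ) : List O :=
  obs A (π.state 0) ::
    ((((List.range i).filter (fun k => decide (π.act k = A))).map
        (fun k => obs A (π.state (k + 1))))
      ++ [obs A (π.state i)])

def indist {S Tid O : Type} [DecidableEq Tid] (obs : Tid → S → O) (A : Tid)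
    (p q : Run S Tid × ℕ) : Prop :=
  Hist obs A p.1 p.2 = Hist obs A q.1 q.2

def Knows {S Tid O : Type} [DecidableEq Tid] (obs : Tid → S → O) (A : Tid)
    (φ : Run S Tid × ℕ → Prop) (p : Run S Tid × ℕ) : Prop :=
  ∀ q, indist obs A p q → φ q

theorem hist_succ_of_act_ne {S Tid O : Type} [DecidableEq Tid]
    {obs : Tid → S → O} {A : Tid} {π : Run S Tid} {k : ℕ} (hact : π.act k ≠ A)
    (hobs : obs A (π.state (k + 1)) = obs A (π.state k)) :
    Hist obs A π (k + 1) = Hist obs A π k := by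
  simp [Hist, List.range_succ, hact, hobs]

theorem hist_eq_of_forall_act_ne {S Tid O : Type} [DecidableEq Tid]
    {obs : Tid → S → O} {A : Tid} {π : Run S Tid}
    (hobs : ∀ k, π.act k ≠ A → obs A (π.state (k + 1)) = obs A (π.state k))
    {i j : ℕ} (hji : j ≤ i) (hno : ∀ m, j ≤ m → m < i → π.act m ≠ A) :
    Hist obs A π i = Hist obs A π j := by
  induction i, hji using Nat.le_induction with
  | base => rfl
  | succ n hjn ih =>
    have hact : π.act n ≠ A := hno n hjn n.lt_succ_self
    rw [hist_succ_of_act_ne hact (hobs n hact)]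
    exact ih fun m hjm hmn => hno m hjm (hmn.trans n.lt_succ_self)

theorem Knows.of_indist {S Tid O : Type} [DecidableEq Tid]
    {obs : Tid → S → O} {A : Tid} {φ : Run S Tid × ℕ → Prop} {p q : Run S Tid × ℕ}
    (hq : Knows obs A φ q) (hpq : indist obs A p q) : Knows obs A φ p :=
  fun r hpr => hq r (hpq.symm.trans hpr)

theorem act_ne_of_forall_not_afterA {S Tid : Type} {A : Tid} {π : Run S Tid} {i j : ℕ}
    (hno : ∀ k, j < k → k ≤ i → ¬ afterA A π k) :
    ∀ m, j ≤ m → m < i → π.act m ≠ A :=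
  fun m hjm hmi hact => hno (m + 1) (by omega) hmi ⟨m.succ_pos, hact⟩

/-- knowledge persistence between `A`-steps: given that `A`'s
observation changes only on `A`-steps, if `(π,i) ⊨ Last_A(K_A φ)` then
`(π,i) ⊨ K_A φ`. -/
theorem knowledge_persistence {S Tid O : Type} [DecidableEq Tid]
    (obs : Tid → S → O) (A : Tid) (φ : Run S Tid × ℕ → Prop)
    (π : Run S Tid) (i : ℕ)
    (hobs : ∀ k, π.act k ≠ A → obs A (π.state (k + 1)) = obs A (π.state k))
    (hlast : LastA A (fun k => Knows obs A φ (π, k)) π i) :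
    Knows obs A φ (π, i) := by
  obtain ⟨j, hji, ⟨-, hknows⟩, hno⟩ := hlast
  exact hknows.of_indist
    (hist_eq_of_forall_act_ne hobs hji (act_ne_of_forall_not_afterA hno))
end

section
/- Rely–guarantee parallel composition: suppose for every thread A, the conjunction of the other threads' guarantees entails A's rely (⋀_{B≠A} G_B ⊨ R_A), and for every A, (G_A ∧ R_A) ⊨ Pres_A(I). Then the conjunction of all guarantees entails Pres(I): any point satisfying ⋀_{A} G_A satisfies Pres(I). -/
def PresA {S Tid : Type} (A : Tid) (I : S → Prop)
    (π : Run S Tid) (i : ℕ) : Prop :=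
  ∀ k, 0 < k → k ≤ i → π.act (k - 1) = A →
    I (π.state (k - 1)) → I (π.state k)

def Pres {S Tid : Type} (I : S → Prop) (π : Run S Tid) (i : ℕ) : Prop :=
  ∀ k, 0 < k → k ≤ i → I (π.state (k - 1)) → I (π.state k)

theorem pres_iff_forall_presA {S Tid : Type} {I : S → Prop} {π : Run S Tid} {i : ℕ} :
    Pres I π i ↔ ∀ A : Tid, PresA A I π i :=
  ⟨fun h _ k hk hki _ => h k hk hki, fun h k hk hki => h (π.act (k - 1)) k hk hki rfl⟩

theorem rg_parallel_composition_general {S Tid : Type} (I : S → Prop)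
    (G R : Tid → Run S Tid × ℕ → Prop)
    (hcompat : ∀ (A : Tid) (p : Run S Tid × ℕ),
      (∀ B : Tid, B ≠ A → G B p) → R A p)
    (hlocal : ∀ (A : Tid) (π : Run S Tid) (i : ℕ),
      G A (π, i) → R A (π, i) → PresA A I π i) :
    ∀ (π : Run S Tid) (i : ℕ), (∀ A : Tid, G A (π, i)) → Pres I π i := by
  intro π i hG
  refine pres_iff_forall_presA.mpr fun A => hlocal A π i (hG A) ?_
  exact hcompat A (π, i) fun B _ => hG B

/-- rely–guarantee parallel composition: if for every thread
`A` the conjunction of the other threads' guarantees entails `A`'s rely, and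
for every `A`, `G_A ∧ R_A ⊨ Pres_A(I)`, then the conjunction of all
guarantees entails `Pres(I)`. -/
theorem rg_parallel_composition {S Tid : Type} [Fintype Tid] (I : S → Prop)
    (G R : Tid → Run S Tid × ℕ → Prop)
    (hcompat : ∀ (A : Tid) (p : Run S Tid × ℕ),
      (∀ B : Tid, B ≠ A → G B p) → R A p)
    (hlocal : ∀ (A : Tid) (π : Run S Tid) (i : ℕ),
      G A (π, i) → R A (π, i) → PresA A I π i) :
    ∀ (π : Run S Tid) (i : ℕ), (∀ A : Tid, G A (π, i)) → Pres I π i :=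
  rg_parallel_composition_general I G R hcompat hlocal
end
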